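/- arXiv:2009.08125 — 5 statements merged into one kernel-verified Lean document; each statement's English description precedes it below -/
import Mathlib

section
/- There is no squarefree monomial ideal I ⊆ k[x_1,x_2,x_3] with full support such that C_1(I) = {1}, C_2(I) = {1,2} and C_3(I) = {1,2,3}; i.e., the chain {1} ⊂ {1,2} ⊂ {1,2,3} is not realizable as the support poset of any squarefree monomial ideal in three variables. -/
open MvPolynomial

/-- The squarefree monomial with support `s`: `∏_{j ∈ s} x_j`. -/
noncomputable def sfMon (𝕜 : Type) [Field 𝕜] {σ : Type} (s : Finset σ) : MvPolynomial σ 𝕜 :=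
  ∏ j ∈ s, X j

/-- The supports of the minimal monomial generating set `G(I)` of a squarefree monomial
ideal `I`: supports `s` of squarefree monomials in `I` no proper (squarefree) divisor of which
lies in `I`. -/
def sqfreeMinGens {𝕜 : Type} [Field 𝕜] {σ : Type} (I : Ideal (MvPolynomial σ 𝕜)) :
    Set (Finset σ) :=
  { s | sfMon 𝕜 s ∈ I ∧ ∀ t : Finset σ, t ⊂ s → sfMon 𝕜 t ∉ I }

/-- `C_i(I) = ⋂ { supp m : m ∈ G(I), x_i ∣ m }`. -/
def suppC {𝕜 : Type} [Field 𝕜] {σ : Type} (I : Ideal (MvPolynomial σ 𝕜)) (i : σ) : Set σ :=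
  ⋂ s ∈ { s | s ∈ sqfreeMinGens I ∧ i ∈ s }, (s : Set σ)


/-- Example 3.2(2) of [MPSW19]: the chain `{1} ⊂ {1,2} ⊂ {1,2,3}` is not realizable as the
support poset of any squarefree monomial ideal with full support in three variables. -/
theorem stmt1 {𝕜 : Type} [Field 𝕜] :
    ¬ ∃ I : Ideal (MvPolynomial (Fin 3) 𝕜),
      (∃ G : Set (Finset (Fin 3)), I = Ideal.span ((fun s => sfMon 𝕜 s) '' G)) ∧
      (⋃ s ∈ sqfreeMinGens I, (↑s : Set (Fin 3))) = Set.univ ∧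
      suppC I 0 = {0} ∧ suppC I 1 = {0, 1} ∧ suppC I 2 = {0, 1, 2} := by
  rintro ⟨I, -, hfull, _h0, h1, h2⟩
  -- There is a minimal generator `s` containing 1 but not 2.
  have h2s : (2 : Fin 3) ∉ suppC I 1 := by
    rw [h1]; simp [Fin.ext_iff]
  rw [suppC, Set.mem_iInter₂] at h2s
  push_neg at h2s
  obtain ⟨s, ⟨hsmin, h1s⟩, h2ns⟩ := h2s
  -- Every minimal generator containing 1 contains 0.
  have h0s : (0 : Fin 3) ∈ suppC I 1 := by rw [h1]; simp
  rw [suppC, Set.mem_iInter₂] at h0s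
  have h0s' : (0 : Fin 3) ∈ s := h0s s ⟨hsmin, h1s⟩
  -- Hence `s = {0, 1}`.
  have hseq : s = ({0, 1} : Finset (Fin 3)) := by
    apply Finset.Subset.antisymm
    · intro x hx
      simp only [Finset.mem_insert, Finset.mem_singleton]
      fin_cases x
      · left; rfl
      · right; rfl
      · exact absurd hx (by simpa using h2ns)
    · intro x hx
      simp only [Finset.mem_insert, Finset.mem_singleton] at hx
      rcases hx with rfl | rfl
      · exact h0s'
      · exact h1s
  -- There is a minimal generator containing 2; it must be all of {0,1,2}.
  have h2u : (2 : Fin 3) ∈ (⋃ s ∈ sqfreeMinGens I, (↑s : Set (Fin 3))) := by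
    rw [hfull]; trivial
  rw [Set.mem_iUnion₂] at h2u
  obtain ⟨t, htmin, h2t⟩ := h2u
  have h0t : (0 : Fin 3) ∈ suppC I 2 := by rw [h2]; simp
  have h1t : (1 : Fin 3) ∈ suppC I 2 := by rw [h2]; simp
  rw [suppC, Set.mem_iInter₂] at h0t h1t
  have h0t' : (0 : Fin 3) ∈ t := h0t t ⟨htmin, h2t⟩
  have h1t' : (1 : Fin 3) ∈ t := h1t t ⟨htmin, h2t⟩
  -- `{0,1}` is a proper subset of `t`, yet `sfMon 𝕜 {0,1} ∈ I`: contradiction.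
  have hsub : ({0, 1} : Finset (Fin 3)) ⊂ t := by
    constructor
    · intro x hx
      simp only [Finset.mem_insert, Finset.mem_singleton] at hx
      rcases hx with rfl | rfl
      · exact h0t'
      · exact h1t'
    · intro hle
      exact absurd (hle h2t) (by simp [Fin.ext_iff])
  exact htmin.2 _ hsub (hseq ▸ hsmin.1)
end

section
/- Let n ≥ 2 and m ≥ 1, and let I_{n,m} ⊆ k[x_1,…,x_{nm}] be the squarefree monomial ideal generated by the monomials x_{(i−1)m+1} x_{(i−1)m+2} ⋯ x_{im} for 1 ≤ i ≤ n, together with the monomials x_1 x_2 ⋯ x_{m−j} · x_{(i−1)m+1} ⋯ x_{(i−1)m+j} for 2 ≤ i ≤ n and 1 ≤ j ≤ m−1. Then for every 1 ≤ i ≤ n and 1 ≤ j ≤ m one has C_{(i−1)m+j}(I_{n,m}) = {(i−1)m+1, …, (i−1)m+j}. In particular the support poset of I_{n,m} consists of n pairwise disjoint chains, each of length m. -/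
open MvPolynomial

lemma sfMon_eq_monomial {𝕜 : Type} [Field 𝕜] {σ : Type} [DecidableEq σ] (s : Finset σ) :
    sfMon 𝕜 s = monomial (Multiset.toFinsupp s.1) 1 := by
  rw [monomial_eq, C_1, one_mul, Finsupp.prod]
  rw [show (Multiset.toFinsupp s.1).support = s from by
    rw [Multiset.toFinsupp_support, Finset.val_toFinset]]
  unfold sfMon
  refine Finset.prod_congr rfl fun j hj => ?_
  rw [Multiset.toFinsupp_apply, Multiset.count_eq_one_of_mem s.nodup hj, pow_one]

lemma toFinsupp_le_iff {σ : Type} [DecidableEq σ] (s t : Finset σ) :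
    Multiset.toFinsupp s.1 ≤ Multiset.toFinsupp t.1 ↔ s ⊆ t := by
  rw [← Finset.val_le_iff, Multiset.le_iff_count, Finsupp.le_def]
  simp

lemma sfMon_mem_span {𝕜 : Type} [Field 𝕜] {σ : Type} [DecidableEq σ]
    (𝒮 : Set (Finset σ)) (t : Finset σ) :
    sfMon 𝕜 t ∈ Ideal.span (sfMon 𝕜 '' 𝒮) ↔ ∃ s ∈ 𝒮, s ⊆ t := by
  classical
  have himg : sfMon 𝕜 '' 𝒮 =
      (fun d => monomial d (1 : 𝕜)) '' ((fun s : Finset σ => Multiset.toFinsupp s.1) '' 𝒮) := by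
    rw [Set.image_image]
    exact Set.image_congr fun s _ => sfMon_eq_monomial s
  rw [himg, sfMon_eq_monomial, mem_ideal_span_monomial_image]
  rw [support_monomial, if_neg one_ne_zero]
  constructor
  · intro H
    obtain ⟨si, hsi, hle⟩ := H _ (Finset.mem_singleton_self _)
    obtain ⟨s, hs, rfl⟩ := hsi
    exact ⟨s, hs, (toFinsupp_le_iff s t).mp hle⟩
  · rintro ⟨s, hs, hst⟩ xi hxi
    rw [Finset.mem_singleton] at hxi
    subst hxi
    exact ⟨_, ⟨s, hs, rfl⟩, (toFinsupp_le_iff s t).mpr hst⟩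

lemma sqfreeMinGens_span {𝕜 : Type} [Field 𝕜] {σ : Type} [DecidableEq σ]
    (𝒮 : Set (Finset σ)) (m : ℕ) (hcard : ∀ s ∈ 𝒮, s.card = m) :
    sqfreeMinGens (Ideal.span (sfMon 𝕜 '' 𝒮)) = 𝒮 := by
  ext s
  simp only [sqfreeMinGens, Set.mem_setOf_eq, sfMon_mem_span]
  constructor
  · rintro ⟨⟨a, ha, has⟩, hmin⟩
    rcases eq_or_ne a s with rfl | hne
    · exact ha
    · exact absurd ⟨a, ha, Finset.Subset.refl a⟩
        (hmin a (Finset.ssubset_iff_subset_ne.mpr ⟨has, hne⟩))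
  · intro hs
    refine ⟨⟨s, hs, Finset.Subset.refl s⟩, ?_⟩
    rintro t hts ⟨a, ha, hat⟩
    have h1 := hcard a ha
    have h2 := hcard s hs
    have h3 := Finset.card_le_card hat
    have h4 := Finset.card_lt_card hts
    omega

lemma card_filter_fin (N a b : ℕ) (hb : b ≤ N) :
    (Finset.univ.filter (fun t : Fin N => a ≤ t.val ∧ t.val < b)).card = b - a := by
  rw [← Nat.card_Ico a b]
  apply Finset.card_bij (fun t _ => t.val)
  · intro t ht
    simp only [Finset.mem_filter] at ht
    simpa [Finset.mem_Ico] using ht.2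
  · intro t _ t' _ h
    exact Fin.val_injective h
  · intro x hx
    rw [Finset.mem_Ico] at hx
    exact ⟨⟨x, lt_of_lt_of_le hx.2 hb⟩, by simp [hx.1, hx.2], rfl⟩

lemma card_filter_fin' (N b : ℕ) (hb : b ≤ N) :
    (Finset.univ.filter (fun t : Fin N => t.val < b)).card = b := by
  have := card_filter_fin N 0 b hb
  simpa using this

lemma block_eq {m a b u : ℕ} (h1 : a * m ≤ u) (h2 : u < a * m + m)
    (h3 : b * m ≤ u) (h4 : u < b * m + m) : a = b := by
  rcases lt_trichotomy a b with h | h | h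
  · have : a * m + m ≤ b * m := by
      calc a * m + m = (a + 1) * m := by ring
      _ ≤ b * m := Nat.mul_le_mul_right m h
    omega
  · exact h
  · have : b * m + m ≤ a * m := by
      calc b * m + m = (b + 1) * m := by ring
      _ ≤ a * m := Nat.mul_le_mul_right m h
    omega

/-- Proposition 3.2: the ideal `I_{n,m}` (with `x_t` for `1 ≤ t ≤ nm` represented by the
variable indexed by `t-1 : Fin (nm)`) generated by
`x_{(i−1)m+1} ⋯ x_{im}` for `1 ≤ i ≤ n` and
`x_1 ⋯ x_{m−j} · x_{(i−1)m+1} ⋯ x_{(i−1)m+j}` for `2 ≤ i ≤ n`, `1 ≤ j ≤ m−1`,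
satisfies `C_{(i−1)m+j}(I_{n,m}) = {(i−1)m+1, …, (i−1)m+j}` for `1 ≤ i ≤ n`, `1 ≤ j ≤ m`;
its support poset is hence `n` disjoint chains of length `m`. -/
theorem stmt2 {𝕜 : Type} [Field 𝕜] (n m : ℕ) (hn : 2 ≤ n) (hm : 1 ≤ m)
    (I : Ideal (MvPolynomial (Fin (n * m)) 𝕜))
    (hI : I = Ideal.span { f |
      (∃ i : ℕ, 1 ≤ i ∧ i ≤ n ∧
        f = sfMon 𝕜 (Finset.univ.filter
          (fun t : Fin (n * m) => (i - 1) * m ≤ t.val ∧ t.val < i * m))) ∨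
      (∃ i j : ℕ, 2 ≤ i ∧ i ≤ n ∧ 1 ≤ j ∧ j ≤ m - 1 ∧
        f = sfMon 𝕜 (Finset.univ.filter
          (fun t : Fin (n * m) =>
            t.val < m - j ∨ ((i - 1) * m ≤ t.val ∧ t.val < (i - 1) * m + j)))) }) :
    ∀ i j : ℕ, 1 ≤ i → i ≤ n → 1 ≤ j → j ≤ m → ∀ h : (i - 1) * m + (j - 1) < n * m,
      suppC I ⟨(i - 1) * m + (j - 1), h⟩ =
        { u : Fin (n * m) | (i - 1) * m ≤ u.val ∧ u.val ≤ (i - 1) * m + (j - 1) } := by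
  set 𝒮 : Set (Finset (Fin (n * m))) := { s |
      (∃ i : ℕ, 1 ≤ i ∧ i ≤ n ∧
        s = Finset.univ.filter
          (fun t : Fin (n * m) => (i - 1) * m ≤ t.val ∧ t.val < i * m)) ∨
      (∃ i j : ℕ, 2 ≤ i ∧ i ≤ n ∧ 1 ≤ j ∧ j ≤ m - 1 ∧
        s = Finset.univ.filter
          (fun t : Fin (n * m) =>
            t.val < m - j ∨ ((i - 1) * m ≤ t.val ∧ t.val < (i - 1) * m + j))) } with h𝒮
  have hIS : I = Ideal.span (sfMon 𝕜 '' 𝒮) := by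
    rw [hI]
    congr 1
    ext f
    constructor
    · rintro (⟨i, h1, h2, rfl⟩ | ⟨i, j, h1, h2, h3, h4, rfl⟩)
      · exact ⟨_, Or.inl ⟨i, h1, h2, rfl⟩, rfl⟩
      · exact ⟨_, Or.inr ⟨i, j, h1, h2, h3, h4, rfl⟩, rfl⟩
    · rintro ⟨s, (⟨i, h1, h2, rfl⟩ | ⟨i, j, h1, h2, h3, h4, rfl⟩), rfl⟩
      · exact Or.inl ⟨i, h1, h2, rfl⟩
      · exact Or.inr ⟨i, j, h1, h2, h3, h4, rfl⟩
  have hcard : ∀ s ∈ 𝒮, s.card = m := by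
    rintro s (⟨i, h1, h2, rfl⟩ | ⟨i, j, h1, h2, h3, h4, rfl⟩)
    · obtain ⟨a, rfl⟩ : ∃ a, i = a + 1 := ⟨i - 1, by omega⟩
      simp only [Nat.add_sub_cancel]
      have hmm : (a + 1) * m = a * m + m := by ring
      have h2' : (a + 1) * m ≤ n * m := Nat.mul_le_mul_right m h2
      rw [card_filter_fin _ _ _ h2']
      omega
    · obtain ⟨a, rfl⟩ : ∃ a, i = a + 1 := ⟨i - 1, by omega⟩
      simp only [Nat.add_sub_cancel]
      have hmm : (a + 1) * m = a * m + m := by ring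
      have h2' : (a + 1) * m ≤ n * m := Nat.mul_le_mul_right m h2
      have hma : m ≤ a * m := Nat.le_mul_of_pos_left m (by omega)
      rw [Finset.filter_or, Finset.card_union_of_disjoint (by
        rw [Finset.disjoint_left]
        intro t ht ht'
        simp only [Finset.mem_filter] at ht ht'
        omega)]
      rw [card_filter_fin' _ _ (by omega), card_filter_fin _ _ _ (by omega)]
      omega
  have hmin : sqfreeMinGens I = 𝒮 := by
    rw [hIS]; exact sqfreeMinGens_span 𝒮 m hcard
  intro i j h1i h2i h1j h2j h
  obtain ⟨a, rfl⟩ : ∃ a, i = a + 1 := ⟨i - 1, by omega⟩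
  obtain ⟨b, rfl⟩ : ∃ b, j = b + 1 := ⟨j - 1, by omega⟩
  have hmm : (a + 1) * m = a * m + m := by ring
  have hnm : (a + 1) * m ≤ n * m := Nat.mul_le_mul_right m h2i
  have hb : b < m := by omega
  simp only [Nat.add_sub_cancel]
  ext x
  simp only [suppC, hmin, Set.mem_iInter, Set.mem_setOf_eq, Finset.mem_coe, and_imp]
  constructor
  · intro H
    have hB := H (Finset.univ.filter
          (fun t : Fin (n * m) => (a + 1 - 1) * m ≤ t.val ∧ t.val < (a + 1) * m))
        (Or.inl ⟨a + 1, by omega, h2i, rfl⟩)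
        (by simp only [Finset.mem_filter, Finset.mem_univ, true_and, Nat.add_sub_cancel]
            exact ⟨Nat.le_add_right _ _, by omega⟩)
    simp only [Finset.mem_filter, Finset.mem_univ, true_and, Nat.add_sub_cancel] at hB
    rcases eq_or_ne (b + 1) m with hbm | hbm
    · exact ⟨hB.1, by omega⟩
    · have hlt : b + 1 < m := by omega
      rcases Nat.eq_zero_or_pos a with rfl | ha
    -- a = 0
      · have hA := H (Finset.univ.filter
            (fun t : Fin (n * m) =>
              t.val < m - (m - (b + 1)) ∨
                ((2 - 1) * m ≤ t.val ∧ t.val < (2 - 1) * m + (m - (b + 1)))))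
          (Or.inr ⟨2, m - (b + 1), le_refl 2, hn, by omega, by omega, rfl⟩)
          (by simp only [Finset.mem_filter, Finset.mem_univ, true_and]
              left
              simp only [zero_mul, zero_add]
              omega)
        simp only [Finset.mem_filter, Finset.mem_univ, true_and,
          show (2 : ℕ) - 1 = 1 from rfl, one_mul] at hA
        simp only [zero_mul, zero_add] at hB ⊢
        omega
    -- a ≥ 1
      · have hma : m ≤ a * m := Nat.le_mul_of_pos_left m ha
        have hA := H (Finset.univ.filter
            (fun t : Fin (n * m) =>
              t.val < m - (b + 1) ∨
                ((a + 1 - 1) * m ≤ t.val ∧ t.val < (a + 1 - 1) * m + (b + 1))))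
          (Or.inr ⟨a + 1, b + 1, by omega, h2i, by omega, by omega, rfl⟩)
          (by simp only [Finset.mem_filter, Finset.mem_univ, true_and, Nat.add_sub_cancel]
              right
              exact ⟨Nat.le_add_right _ _, by omega⟩)
        simp only [Finset.mem_filter, Finset.mem_univ, true_and, Nat.add_sub_cancel] at hA
        omega
  · rintro ⟨hx1, hx2⟩ s hs hu
    rcases hs with ⟨i', h1', h2', rfl⟩ | ⟨i', j', h1', h2', h3', h4', rfl⟩
    · obtain ⟨c, rfl⟩ : ∃ c, i' = c + 1 := ⟨i' - 1, by omega⟩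
      simp only [Finset.mem_filter, Finset.mem_univ, true_and, Nat.add_sub_cancel] at hu ⊢
      have hcm : (c + 1) * m = c * m + m := by ring
      have hca : c = a := block_eq hu.1 (by omega) (Nat.le_add_right _ _) (by omega)
      subst hca
      omega
    · obtain ⟨c, rfl⟩ : ∃ c, i' = c + 1 := ⟨i' - 1, by omega⟩
      simp only [Finset.mem_filter, Finset.mem_univ, true_and, Nat.add_sub_cancel] at hu ⊢
      have hcm : (c + 1) * m = c * m + m := by ring
      have hmc : m ≤ c * m := Nat.le_mul_of_pos_left m (by omega)
      rcases hu with hu | hu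
      · have key : a = 0 ∧ a * m = 0 ∨ m ≤ a * m := by
          rcases Nat.eq_zero_or_pos a with rfl | ha
          · exact Or.inl ⟨rfl, zero_mul m⟩
          · exact Or.inr (Nat.le_mul_of_pos_left m ha)
        omega
      · have hca : c = a := block_eq hu.1 (by omega) (Nat.le_add_right _ _) (by omega)
        subst hca
        omega
end

section
/- Let m ≥ 1 and define integers K^m_{a,b} for a, b ≥ 0 by the base cases K^m_{a,0} = m+a, K^m_{0,b} = C(m, b+1), K^m_{1,b} = C(m,b) + C(m,b+1), and the recurrence K^m_{a,b} = K^m_{a−2,b−1} + K^m_{a−1,b} for a ≥ 2, b ≥ 1. Then for all a, b ≥ 0, K^m_{a,b} = Σ_{j≥0} C(a+1−j, j)·C(m, b+1−j) = C(a+1,0)·C(m,b+1) + C(a,1)·C(m,b) + C(a−1,2)·C(m,b−1) + ⋯ (a finite sum, since C(a+1−j, j) = 0 for j large). -/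
/-- The numbers `K^m_{a,b}`, defined by the base cases `K^m_{a,0} = m+a`,
`K^m_{0,b} = C(m,b+1)`, `K^m_{1,b} = C(m,b) + C(m,b+1)`, and the recurrence
`K^m_{a,b} = K^m_{a−2,b−1} + K^m_{a−1,b}` for `a ≥ 2`, `b ≥ 1`. -/
def Kno (m : ℕ) : ℕ → ℕ → ℕ
  | a, 0 => m + a
  | 0, b + 1 => Nat.choose m (b + 2)
  | 1, b + 1 => Nat.choose m (b + 1) + Nat.choose m (b + 2)
  | a + 2, b + 1 => Kno m a b + Kno m (a + 1) (b + 1)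

/-! The closed form satisfies the base cases and the recurrence defining `Kno`, so the two
agree by the same induction. The recurrence is Pascal's rule
`C(a+2-j, j) = C(a+1-j, j-1) + C(a+1-j, j)` applied termwise: the first summands give
`K^m_{a,b}` shifted by one index, the second ones `K^m_{a+1,b+1}` without its `j = 0` term,
which is exactly the extra `j = 0` term `C(m, b+2)` of `K^m_{a+2,b+1}`. -/

theorem Nat.choose_succ_sub_succ (n i : ℕ) :
    (n + 1 - i).choose (i + 1) = (n - i).choose i + (n - i).choose (i + 1) := by
  rcases le_or_gt i n with h | h
  · rw [Nat.sub_add_comm h, Nat.choose_succ_succ]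
  · rw [Nat.sub_eq_zero_of_le h, Nat.sub_eq_zero_of_le h.le,
      Nat.choose_eq_zero_of_lt (by omega : 0 < i), zero_add]

theorem Nat.choose_sub_self_eq_zero {n j : ℕ} (h : n < 2 * j) : (n - j).choose j = 0 :=
  Nat.choose_eq_zero_of_lt (by omega)

def kClosed (m a b : ℕ) : ℕ :=
  ∑ j ∈ Finset.range (b + 2), (a + 1 - j).choose j * m.choose (b + 1 - j)

theorem kClosed_zero_right (m a : ℕ) : kClosed m a 0 = m + a := by
  simp [kClosed, Finset.sum_range_succ]

theorem kClosed_zero_succ (m b : ℕ) : kClosed m 0 (b + 1) = m.choose (b + 2) := by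
  rw [kClosed, Finset.sum_range_succ', Finset.sum_eq_zero]
  · simp
  · intro j _
    rw [Nat.choose_sub_self_eq_zero (by omega), zero_mul]

theorem kClosed_one_succ (m b : ℕ) :
    kClosed m 1 (b + 1) = m.choose (b + 1) + m.choose (b + 2) := by
  rw [kClosed, Finset.sum_range_succ', Finset.sum_range_succ', Finset.sum_eq_zero]
  · simp
  · intro j _
    rw [Nat.choose_sub_self_eq_zero (by omega), zero_mul]

theorem kClosed_add_two_succ (m a b : ℕ) :
    kClosed m (a + 2) (b + 1) = kClosed m a b + kClosed m (a + 1) (b + 1) := by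
  have pascal (j : ℕ) : (a + 2 + 1 - (j + 1)).choose (j + 1) * m.choose (b + 1 + 1 - (j + 1)) =
      (a + 1 - j).choose j * m.choose (b + 1 - j) +
        (a + 1 + 1 - (j + 1)).choose (j + 1) * m.choose (b + 1 + 1 - (j + 1)) := by
    rw [show a + 2 + 1 - (j + 1) = a + 1 + 1 - j by omega,
      show a + 1 + 1 - (j + 1) = a + 1 - j by omega, Nat.choose_succ_sub_succ, add_mul]
    simp only [Nat.add_sub_add_right]
  simp only [kClosed]
  rw [Finset.sum_range_succ', Finset.sum_range_succ' _ (b + 2),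
    Finset.sum_congr rfl fun j _ => pascal j, Finset.sum_add_distrib]
  simp only [Nat.sub_zero, Nat.choose_zero_right]
  ring

/-- Summing over `j < b + 2` is the informal sum: its terms with `j ≥ b + 2` vanish, whereas
here truncated subtraction would turn `C(m, b + 1 - j)` into `C(m, 0) = 1`. -/
theorem stmt7_general (m : ℕ) :
    ∀ a b : ℕ, Kno m a b =
      ∑ j ∈ Finset.range (b + 2), Nat.choose (a + 1 - j) j * Nat.choose m (b + 1 - j) := by
  intro a b
  change Kno m a b = kClosed m a b
  induction a, b using Kno.induct with
  | case1 a => rw [Kno, kClosed_zero_right]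
  | case2 b => rw [Kno, kClosed_zero_succ]
  | case3 b => rw [Kno, kClosed_one_succ]
  | case4 a b ih₁ ih₂ => rw [Kno, ih₁, ih₂, kClosed_add_two_succ]

/-- The closed form: `K^m_{a,b} = Σ_{j≥0} C(a+1−j, j)·C(m, b+1−j)`
(a finite sum: all terms with `j ≥ b+2` vanish, since then `C(m, b+1−j)` should be `0`;
summing over `j ∈ [0, b+1]` therefore realizes exactly the intended sum, while the
truncated subtraction in `C(a+1−j, j)` correctly yields `0` whenever `a+1−j < j`). -/
theorem stmt7 (m : ℕ) (hm : 1 ≤ m) :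
    ∀ a b : ℕ, Kno m a b =
      ∑ j ∈ Finset.range (b + 2), Nat.choose (a + 1 - j) j * Nat.choose m (b + 1 - j) :=
  stmt7_general m
end

section
/- Let P be a tree on {1,…,n} with leaves l_1,…,l_k, and let I_L(P) be its leaf ideal. Then: (a) the k monomials ∏_{j ≤_P l} x_j (l a leaf of P) form the minimal monomial generating set of I_L(P); (b) for every i ∈ {1,…,n}, C_i(I_L(P)) = ⋂_{l leaf of P with i ≤_P l} { j : j ≤_P l }; and (c) if every non-maximal element of P has at least two children, then C_i(I_L(P)) = { j : j ≤_P i } for every i, so the map i ↦ C_i(I_L(P)) is an isomorphism from P onto the support poset of I_L(P). -/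
open MvPolynomial

open Classical

/-- A partial order `P` on `α` is a forest if, for every `p`, the set of elements strictly
below `p` is a chain. -/
def IsPForest {α : Type} (P : PartialOrder α) : Prop :=
  ∀ p q r : α, P.lt q p → P.lt r p → P.le q r ∨ P.le r q

/-- `l` is maximal (a leaf) for the partial order `P`. -/
def PIsMax {α : Type} (P : PartialOrder α) (l : α) : Prop := ∀ q, P.le l q → q = l

/-- `r` is minimal (a root) for the partial order `P`. -/
def PIsMin {α : Type} (P : PartialOrder α) (r : α) : Prop := ∀ q, P.le q r → q = r

/-- `q` is a child of `p`: `q` covers `p` in `P`. -/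
def PChild {α : Type} (P : PartialOrder α) (p q : α) : Prop :=
  P.lt p q ∧ ∀ r, P.lt p r → ¬ P.lt r q

/-- The leaf ideal of a forest `P` on `{1,…,n}`:
`I_L(P) = ⟨ ∏_{j ≤_P l} x_j : l a leaf of P ⟩`. -/
noncomputable def leafIdeal (𝕜 : Type) [Field 𝕜] {n : ℕ} (P : PartialOrder (Fin n)) :
    Ideal (MvPolynomial (Fin n) 𝕜) :=
  Ideal.span { f | ∃ l : Fin n, PIsMax P l ∧
    f = sfMon 𝕜 (Finset.univ.filter (fun j => P.le j l)) }
/-!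
The leaf monomials have pairwise incomparable supports, since a leaf is the top of its own
down-set; a monomial ideal spanned by an antichain of squarefree monomials has exactly those as
minimal generators, which gives (a), and (b) is then the definition of `C_i`.

For (c), let `j` lie below every leaf above `i` but `j ≰ i`. Comparing `i` and `j` under a
common leaf gives `i < j`. Two distinct children of `i` are incomparable, so some child `c` of
`i` is not below `j`; comparing `j` and `c` under a leaf above `c` gives `j < c`, contradicting
that `c` covers `i`.
-/

section SquarefreeMonomial

variable {𝕜 : Type} [Field 𝕜] {σ : Type}

lemma Finset.toFinsupp_val_eq_sum_single (t : Finset σ) :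
    t.val.toFinsupp = ∑ j ∈ t, Finsupp.single j 1 := by
  ext j
  rw [Multiset.toFinsupp_apply, Finsupp.finsetSum_apply, Multiset.count_eq_of_nodup t.nodup]
  simp [Finsupp.single_apply]

lemma Finset.toFinsupp_val_le_iff {s t : Finset σ} :
    s.val.toFinsupp ≤ t.val.toFinsupp ↔ s ⊆ t :=
  Finsupp.orderIsoMultiset.symm.le_iff_le.trans Finset.val_le_iff

lemma sfMon_eq_monomial_s9 (t : Finset σ) : sfMon 𝕜 t = monomial t.val.toFinsupp 1 := by
  rw [t.toFinsupp_val_eq_sum_single, monomial_sum_one]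
  rfl

lemma sfMon_mem_span_sfMon_iff {S : Set (Finset σ)} {t : Finset σ} :
    sfMon 𝕜 t ∈ Ideal.span (sfMon 𝕜 '' S) ↔ ∃ s ∈ S, s ⊆ t := by
  have hgens : sfMon 𝕜 '' S =
      (fun d => monomial d (1 : 𝕜)) '' ((fun s : Finset σ => s.val.toFinsupp) '' S) := by
    rw [Set.image_image]
    exact Set.image_congr fun s _ => sfMon_eq_monomial_s9 s
  rw [hgens, sfMon_eq_monomial_s9, mem_ideal_span_monomial_image,
    support_monomial, if_neg one_ne_zero]
  simp [Finset.toFinsupp_val_le_iff]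

theorem sqfreeMinGens_span_sfMon {S : Set (Finset σ)} (hS : IsAntichain (· ⊆ ·) S) :
    sqfreeMinGens (Ideal.span (sfMon 𝕜 '' S)) = S := by
  ext s
  simp only [sqfreeMinGens, Set.mem_ofPred_eq, sfMon_mem_span_sfMon_iff]
  constructor
  · rintro ⟨⟨s', hs', hsub⟩, hmin⟩
    obtain rfl | hssub := hsub.eq_or_ssubset
    · exact hs'
    · exact absurd ⟨s', hs', subset_rfl⟩ (hmin s' hssub)
  · rintro hs
    refine ⟨⟨s, hs, subset_rfl⟩, fun t hts ⟨s', hs', hsub⟩ => ?_⟩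
    have hs's := hsub.trans_ssubset hts
    exact hS hs' hs hs's.ne hs's.subset

end SquarefreeMonomial

section Forest

variable {α : Type} (P : PartialOrder α)

lemma exists_pIsMax_le [Finite α] (x : α) : ∃ l, PIsMax P l ∧ P.le x l := by
  let _ := P
  obtain ⟨l, hxl, -, hl⟩ := Finite.exists_le_maximal (p := fun _ : α => True) trivial
  exact ⟨l, fun q hlq => le_antisymm (hl trivial hlq) hlq, hxl⟩

variable {P}

lemma IsPForest.le_total_of_le (hP : IsPForest P) {a b c : α} (ha : P.le a c) (hb : P.le b c) :
    P.le a b ∨ P.le b a := by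
  let _ := P
  obtain rfl | hac := ha.eq_or_lt
  · exact Or.inr hb
  obtain rfl | hbc := hb.eq_or_lt
  · exact Or.inl ha
  exact hP c a b hac hbc

lemma PChild.not_le_of_ne {p q q' : α} (hq : PChild P p q) (hq' : PChild P p q')
    (hne : q ≠ q') : ¬ P.le q q' := by
  let _ := P
  exact fun h => hq'.2 q hq.1 (lt_of_le_of_ne h hne)

lemma IsPForest.le_of_forall_pIsMax [Finite α] (hP : IsPForest P)
    (hbranch : ∀ p, ¬ PIsMax P p → ∃ q q', q ≠ q' ∧ PChild P p q ∧ PChild P p q')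
    {i j : α} (hj : ∀ l, PIsMax P l → P.le i l → P.le j l) : P.le j i := by
  let _ := P
  by_contra hji
  obtain ⟨l, hl, hil⟩ := exists_pIsMax_le P i
  have hij : i < j := by
    refine lt_of_le_of_ne ((hP.le_total_of_le hil (hj l hl hil)).resolve_right hji) ?_
    rintro rfl
    exact hji le_rfl
  obtain ⟨q, q', hne, hq, hq'⟩ := hbranch i fun hi => hij.ne' (hi j hij.le)
  obtain ⟨c, hc, hcj⟩ : ∃ c, PChild P i c ∧ ¬ c ≤ j := by
    by_cases hqj : q ≤ j
    · refine ⟨q', hq', fun hq'j => ?_⟩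
      rcases hP.le_total_of_le hqj hq'j with h | h
      · exact hq.not_le_of_ne hq' hne h
      · exact hq'.not_le_of_ne hq hne.symm h
    · exact ⟨q, hq, hqj⟩
  obtain ⟨l', hl', hcl'⟩ := exists_pIsMax_le P c
  have hjc : j < c := by
    have hjl' := hj l' hl' (hc.1.le.trans hcl')
    refine lt_of_le_of_ne ((hP.le_total_of_le hcl' hjl').resolve_left hcj) ?_
    rintro rfl
    exact hcj le_rfl
  exact hc.2 j hij hjc

end Forest

section LeafIdeal

def leafSupports {α : Type} [Fintype α] (P : PartialOrder α) : Set (Finset α) :=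
  { s | ∃ l : α, PIsMax P l ∧ s = Finset.univ.filter (fun j => P.le j l) }

lemma isAntichain_leafSupports {α : Type} [Fintype α] (P : PartialOrder α) :
    IsAntichain (· ⊆ ·) (leafSupports P) := by
  rintro _ ⟨l, hl, rfl⟩ _ ⟨l', -, rfl⟩ hne hsub
  have hll' : P.le l l' := by simpa using hsub (by simp)
  exact hne (by rw [hl l' hll'])

variable {𝕜 : Type} [Field 𝕜] {n : ℕ} (P : PartialOrder (Fin n))

lemma leafIdeal_eq_span_sfMon : leafIdeal 𝕜 P = Ideal.span (sfMon 𝕜 '' leafSupports P) := by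
  rw [leafIdeal, leafSupports]
  congr 1
  ext f
  simp [eq_comm]

theorem sqfreeMinGens_leafIdeal : sqfreeMinGens (leafIdeal 𝕜 P) = leafSupports P := by
  rw [leafIdeal_eq_span_sfMon, sqfreeMinGens_span_sfMon (isAntichain_leafSupports P)]

theorem suppC_leafIdeal (i : Fin n) : suppC (leafIdeal 𝕜 P) i =
    ⋂ l ∈ { l : Fin n | PIsMax P l ∧ P.le i l }, { j : Fin n | P.le j l } := by
  ext j
  simp only [suppC, sqfreeMinGens_leafIdeal, leafSupports, Set.mem_iInter, Set.mem_ofPred_eq,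
    and_imp, forall_exists_index]
  rw [forall_comm]
  simp

variable {P}

theorem suppC_leafIdeal_eq_of_branching (hP : IsPForest P)
    (hbranch : ∀ p, ¬ PIsMax P p → ∃ q q', q ≠ q' ∧ PChild P p q ∧ PChild P p q')
    (i : Fin n) : suppC (leafIdeal 𝕜 P) i = { j : Fin n | P.le j i } := by
  rw [suppC_leafIdeal]
  ext j
  simp only [Set.mem_iInter, Set.mem_ofPred_eq, and_imp]
  exact ⟨hP.le_of_forall_pIsMax hbranch, fun hji l _ hil => P.le_trans _ _ _ hji hil⟩

end LeafIdeal

theorem stmt9_general {𝕜 : Type} [Field 𝕜] (n : ℕ) (P : PartialOrder (Fin n))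
    (hforest : IsPForest P) :
    (sqfreeMinGens (leafIdeal 𝕜 P) =
      { s | ∃ l : Fin n, PIsMax P l ∧ s = Finset.univ.filter (fun j => P.le j l) }) ∧
    (∀ i : Fin n, suppC (leafIdeal 𝕜 P) i =
      ⋂ l ∈ { l : Fin n | PIsMax P l ∧ P.le i l }, { j : Fin n | P.le j l }) ∧
    ((∀ p : Fin n, ¬ PIsMax P p → ∃ q q' : Fin n, q ≠ q' ∧ PChild P p q ∧ PChild P p q') →
      (∀ i : Fin n, suppC (leafIdeal 𝕜 P) i = { j : Fin n | P.le j i }) ∧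
      (Function.Injective (fun i => suppC (leafIdeal 𝕜 P) i) ∧
       ∀ i i' : Fin n, suppC (leafIdeal 𝕜 P) i ⊆ suppC (leafIdeal 𝕜 P) i' ↔ P.le i i')) := by
  refine ⟨sqfreeMinGens_leafIdeal P, suppC_leafIdeal P, fun hbranch => ?_⟩
  have hC := suppC_leafIdeal_eq_of_branching (𝕜 := 𝕜) hforest hbranch
  let _ := P
  have hC_subset_iff (i i' : Fin n) :
      suppC (leafIdeal 𝕜 P) i ⊆ suppC (leafIdeal 𝕜 P) i' ↔ P.le i i' := by
    rw [hC, hC]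
    exact Set.Iic_subset_Iic
  exact ⟨hC, fun i i' h => le_antisymm ((hC_subset_iff i i').mp h.le)
    ((hC_subset_iff i' i).mp h.ge), hC_subset_iff⟩

/-- For a tree `P` on `{1,…,n}`:
(a) the monomials `∏_{j ≤_P l} x_j`, for `l` a leaf, form the minimal monomial generating
set of the leaf ideal `I_L(P)`;
(b) `C_i(I_L(P)) = ⋂_{l leaf, i ≤_P l} { j : j ≤_P l }`;
(c) if every non-maximal element has at least two children, then
`C_i(I_L(P)) = { j : j ≤_P i }`, so `i ↦ C_i(I_L(P))` is an isomorphism from `P` onto the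
support poset of `I_L(P)` (ordered by inclusion). -/
theorem stmt9 {𝕜 : Type} [Field 𝕜] (n : ℕ) (P : PartialOrder (Fin n))
    (hforest : IsPForest P) (hroot : ∃! r : Fin n, PIsMin P r) :
    (sqfreeMinGens (leafIdeal 𝕜 P) =
      { s | ∃ l : Fin n, PIsMax P l ∧ s = Finset.univ.filter (fun j => P.le j l) }) ∧
    (∀ i : Fin n, suppC (leafIdeal 𝕜 P) i =
      ⋂ l ∈ { l : Fin n | PIsMax P l ∧ P.le i l }, { j : Fin n | P.le j l }) ∧
    ((∀ p : Fin n, ¬ PIsMax P p → ∃ q q' : Fin n, q ≠ q' ∧ PChild P p q ∧ PChild P p q') →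
      (∀ i : Fin n, suppC (leafIdeal 𝕜 P) i = { j : Fin n | P.le j i }) ∧
      (Function.Injective (fun i => suppC (leafIdeal 𝕜 P) i) ∧
       ∀ i i' : Fin n, suppC (leafIdeal 𝕜 P) i ⊆ suppC (leafIdeal 𝕜 P) i' ↔ P.le i i')) :=
  stmt9_general n P hforest
end

section
/- For every forest P on {1,…,n}, the leaf ideal I_L(P) ⊆ k[x_1,…,x_n] is a series-parallel ideal up to relabeling of the variables: there is a permutation π of {1,…,n} such that the image of I_L(P) under the ring isomorphism sending x_i to x_{π(i)} is a series-parallel ideal. -/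
/-!
Induction on the size of the forest `P`. Let `r` be a minimal element. If `r` lies below every
element, each leaf monomial of `P` is `x_r` times a leaf monomial of `P ∖ {r}`, and since the
intersection of squarefree monomial ideals is generated by the unions of the supports of their
generators, `I_L(P) = ⟨x_r⟩ ∩ I_L(P ∖ {r})`. Otherwise, because the elements below any point form
a chain, the up-set of `r` is also a down-set: `P` splits into two nonempty parts with no
comparabilities between them, and `I_L(P)` is the sum of their leaf ideals, which live in disjoint
sets of variables.
-/

open MvPolynomial

open Classical

/-- Series-parallel ideals, defined inductively: `⟨x_1⟩ ⊆ 𝕜[x_1]` is series-parallel, and if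
`I₁ ⊆ 𝕜[x_1,…,x_n]` and `I₂ ⊆ 𝕜[x_{n+1},…,x_{n+m}]` are series-parallel then so are
`I₁' + I₂'` and `I₁' ∩ I₂'` in `𝕜[x_1,…,x_{n+m}]`, where `I₁'`, `I₂'` are the extensions
along the inclusions of polynomial rings (renaming along `Fin.castAdd` and `Fin.natAdd`). -/
inductive IsSeriesParallel (𝕜 : Type) [Field 𝕜] :
    (n : ℕ) → Ideal (MvPolynomial (Fin n) 𝕜) → Prop
  | basic : IsSeriesParallel 𝕜 1 (Ideal.span {MvPolynomial.X 0})
  | sum {n m : ℕ} {I₁ : Ideal (MvPolynomial (Fin n) 𝕜)} {I₂ : Ideal (MvPolynomial (Fin m) 𝕜)} :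
      IsSeriesParallel 𝕜 n I₁ → IsSeriesParallel 𝕜 m I₂ →
      IsSeriesParallel 𝕜 (n + m)
        (Ideal.map (MvPolynomial.rename (Fin.castAdd m)).toRingHom I₁ ⊔
         Ideal.map (MvPolynomial.rename (Fin.natAdd n)).toRingHom I₂)
  | inter {n m : ℕ} {I₁ : Ideal (MvPolynomial (Fin n) 𝕜)} {I₂ : Ideal (MvPolynomial (Fin m) 𝕜)} :
      IsSeriesParallel 𝕜 n I₁ → IsSeriesParallel 𝕜 m I₂ →
      IsSeriesParallel 𝕜 (n + m)
        (Ideal.map (MvPolynomial.rename (Fin.castAdd m)).toRingHom I₁ ⊓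
         Ideal.map (MvPolynomial.rename (Fin.natAdd n)).toRingHom I₂)


section SquarefreeMonomial

variable {𝕜 : Type} [Field 𝕜] {σ τ : Type}

lemma sfMon_eq_monomial_s16 (s : Finset σ) :
    sfMon 𝕜 s = monomial (∑ j ∈ s, Finsupp.single j 1) 1 := by
  rw [monomial_sum_one]
  rfl

lemma sum_single_one_le_iff {s : Finset σ} {d : σ →₀ ℕ} :
    ∑ j ∈ s, Finsupp.single j 1 ≤ d ↔ ∀ j ∈ s, 1 ≤ d j := by
  simp only [Finsupp.le_def, Finsupp.finsetSum_apply, Finsupp.single_apply, Finset.sum_ite_eq']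
  refine ⟨fun h j hj => by simpa [hj] using h j, fun h j => ?_⟩
  split_ifs with hj
  exacts [h j hj, Nat.zero_le _]

lemma mem_span_sfMon_image_iff {S : Set (Finset σ)} {f : MvPolynomial σ 𝕜} :
    f ∈ Ideal.span (sfMon 𝕜 '' S) ↔ ∀ d ∈ f.support, ∃ s ∈ S, ∀ j ∈ s, 1 ≤ d j := by
  rw [show sfMon 𝕜 '' S = (fun d => monomial d (1 : 𝕜)) ''
      ((fun s : Finset σ => ∑ j ∈ s, Finsupp.single j 1) '' S) by
    rw [Set.image_image]; exact Set.image_congr fun s _ => sfMon_eq_monomial_s16 s,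
    mem_ideal_span_monomial_image]
  simp [sum_single_one_le_iff]

lemma span_sfMon_image_inf (S T : Set (Finset σ)) :
    Ideal.span (sfMon 𝕜 '' S) ⊓ Ideal.span (sfMon 𝕜 '' T) =
      Ideal.span (sfMon 𝕜 '' Set.image2 (· ∪ ·) S T) := by
  ext f
  simp only [Ideal.mem_inf, mem_span_sfMon_image_iff, Set.exists_mem_image2, Finset.mem_union]
  constructor
  · rintro ⟨hS, hT⟩ d hd
    obtain ⟨s, hs, hsd⟩ := hS d hd
    obtain ⟨t, ht, htd⟩ := hT d hd
    exact ⟨s, hs, t, ht, fun j hj => hj.elim (hsd j) (htd j)⟩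
  · intro h
    refine ⟨fun d hd => ?_, fun d hd => ?_⟩ <;> obtain ⟨s, hs, t, ht, hd⟩ := h d hd
    exacts [⟨s, hs, fun j hj => hd j (.inl hj)⟩, ⟨t, ht, fun j hj => hd j (.inr hj)⟩]

lemma rename_sfMon {g : σ → τ} (hg : Function.Injective g) (s : Finset σ) :
    rename g (sfMon 𝕜 s) = sfMon 𝕜 (s.image g) := by
  simp [sfMon, Finset.prod_image hg.injOn]

end SquarefreeMonomial

section Relabeling

variable {𝕜 : Type} [Field 𝕜] {α β γ : Type}

def IsSeriesParallelUpToRelabel (I : Ideal (MvPolynomial α 𝕜)) : Prop :=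
  ∃ (m : ℕ) (e : α ≃ Fin m), IsSeriesParallel 𝕜 m (I.map (rename e))

lemma map_rename_map_rename (f : α → β) (g : β → γ) (I : Ideal (MvPolynomial α 𝕜)) :
    (I.map (rename f)).map (rename g) = I.map (rename (g ∘ f)) := by
  rw [← rename_comp_rename]
  exact Ideal.map_map (rename f).toRingHom (rename g).toRingHom

lemma map_rename_equiv_inf (e : α ≃ β) (I J : Ideal (MvPolynomial α 𝕜)) :
    (I ⊓ J).map (rename e) = I.map (rename e) ⊓ J.map (rename e) := by
  have h (K : Ideal (MvPolynomial α 𝕜)) :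
      K.map (rename e) = K.comap (renameEquiv 𝕜 e).symm.toRingEquiv :=
    Ideal.map_comap_of_equiv (renameEquiv 𝕜 e).toRingEquiv
  simp only [h, Ideal.comap_inf]

section SumCongr

variable {m₁ m₂ : ℕ} (e₁ : α ≃ Fin m₁) (e₂ : β ≃ Fin m₂)

lemma map_rename_inl_sumCongr_finSumFinEquiv (I : Ideal (MvPolynomial α 𝕜)) :
    (I.map (rename Sum.inl)).map (rename ((e₁.sumCongr e₂).trans finSumFinEquiv)) =
      (I.map (rename e₁)).map (rename (Fin.castAdd m₂)) := by
  rw [map_rename_map_rename, map_rename_map_rename]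
  rfl

lemma map_rename_inr_sumCongr_finSumFinEquiv (J : Ideal (MvPolynomial β 𝕜)) :
    (J.map (rename Sum.inr)).map (rename ((e₁.sumCongr e₂).trans finSumFinEquiv)) =
      (J.map (rename e₂)).map (rename (Fin.natAdd m₁)) := by
  rw [map_rename_map_rename, map_rename_map_rename]
  rfl

end SumCongr

namespace IsSeriesParallelUpToRelabel

lemma span_X [Unique α] :
    IsSeriesParallelUpToRelabel (Ideal.span {(X default : MvPolynomial α 𝕜)}) :=
  ⟨1, Equiv.ofUnique α (Fin 1), by
    simpa [Ideal.map_span] using IsSeriesParallel.basic (𝕜 := 𝕜)⟩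

lemma map_rename_equiv {I : Ideal (MvPolynomial α 𝕜)} (hI : IsSeriesParallelUpToRelabel I)
    (f : α ≃ β) : IsSeriesParallelUpToRelabel (I.map (rename f)) := by
  obtain ⟨m, e, h⟩ := hI
  refine ⟨m, f.symm.trans e, ?_⟩
  rw [map_rename_map_rename]
  convert h using 3
  ext a
  simp

variable {I : Ideal (MvPolynomial α 𝕜)} {J : Ideal (MvPolynomial β 𝕜)}

lemma sum_sup (hI : IsSeriesParallelUpToRelabel I) (hJ : IsSeriesParallelUpToRelabel J) :
    IsSeriesParallelUpToRelabel (I.map (rename Sum.inl) ⊔ J.map (rename Sum.inr)) := by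
  obtain ⟨m₁, e₁, h₁⟩ := hI
  obtain ⟨m₂, e₂, h₂⟩ := hJ
  refine ⟨m₁ + m₂, (e₁.sumCongr e₂).trans finSumFinEquiv, ?_⟩
  rw [Ideal.map_sup, map_rename_inl_sumCongr_finSumFinEquiv, map_rename_inr_sumCongr_finSumFinEquiv]
  exact h₁.sum h₂

lemma sum_inf (hI : IsSeriesParallelUpToRelabel I) (hJ : IsSeriesParallelUpToRelabel J) :
    IsSeriesParallelUpToRelabel (I.map (rename Sum.inl) ⊓ J.map (rename Sum.inr)) := by
  obtain ⟨m₁, e₁, h₁⟩ := hI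
  obtain ⟨m₂, e₂, h₂⟩ := hJ
  refine ⟨m₁ + m₂, (e₁.sumCongr e₂).trans finSumFinEquiv, ?_⟩
  rw [map_rename_equiv_inf, map_rename_inl_sumCongr_finSumFinEquiv,
    map_rename_inr_sumCongr_finSumFinEquiv]
  exact h₁.inter h₂

lemma sup_compl {s : Set α} {I : Ideal (MvPolynomial s 𝕜)} {J : Ideal (MvPolynomial ↥sᶜ 𝕜)}
    (hI : IsSeriesParallelUpToRelabel I) (hJ : IsSeriesParallelUpToRelabel J) :
    IsSeriesParallelUpToRelabel (I.map (rename Subtype.val) ⊔ J.map (rename Subtype.val)) := by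
  have h := (hI.sum_sup hJ).map_rename_equiv (Equiv.Set.sumCompl s)
  rw [Ideal.map_sup, map_rename_map_rename, map_rename_map_rename] at h
  exact h

lemma inf_compl {s : Set α} {I : Ideal (MvPolynomial s 𝕜)} {J : Ideal (MvPolynomial ↥sᶜ 𝕜)}
    (hI : IsSeriesParallelUpToRelabel I) (hJ : IsSeriesParallelUpToRelabel J) :
    IsSeriesParallelUpToRelabel (I.map (rename Subtype.val) ⊓ J.map (rename Subtype.val)) := by
  have h := (hI.sum_inf hJ).map_rename_equiv (Equiv.Set.sumCompl s)
  rw [map_rename_equiv_inf, map_rename_map_rename, map_rename_map_rename] at h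
  exact h

end IsSeriesParallelUpToRelabel

end Relabeling

section LeafIdeal

variable (𝕜 : Type) [Field 𝕜] {α : Type} [Finite α] [PartialOrder α]

noncomputable def leafMonomial (l : α) : MvPolynomial α 𝕜 :=
  sfMon 𝕜 (Set.Iic l).toFinite.toFinset

variable (α) in
noncomputable def posetLeafIdeal : Ideal (MvPolynomial α 𝕜) :=
  Ideal.span (leafMonomial 𝕜 '' {l | IsMax l})

lemma leafIdeal_eq_posetLeafIdeal {n : ℕ} (P : PartialOrder (Fin n)) :
    leafIdeal 𝕜 P = @posetLeafIdeal 𝕜 _ (Fin n) _ P := by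
  have hmax (l : Fin n) : PIsMax P l ↔ @IsMax _ P.toLE l :=
    ⟨fun h q hq => by rw [h q hq],
      fun h q hq => P.le_antisymm q l (h hq) hq⟩
  have hmon (l : Fin n) : @leafMonomial 𝕜 _ _ _ P l =
      sfMon 𝕜 (Finset.univ.filter fun j => P.le j l) := by
    rw [leafMonomial]
    congr 1
    ext j
    simp only [Set.Finite.mem_toFinset, Finset.mem_filter, Finset.mem_univ, true_and]
    rfl
  simp only [leafIdeal, posetLeafIdeal, hmax, hmon]
  congr 1
  ext f
  simp only [Set.mem_ofPred_eq, Set.mem_image, eq_comm (a := f)]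

variable {𝕜}

omit [Finite α] in
lemma isMax_coe_iff_of_isUpperSet {s : Set α} (hs : IsUpperSet s) {l : s} :
    IsMax (l : α) ↔ IsMax l :=
  ⟨fun h _ hb => h hb, fun h b hb => h (show l ≤ ⟨b, hs hb l.2⟩ from hb)⟩

lemma rename_val_leafMonomial {s : Set α} (hs : IsLowerSet s) (l : s) :
    rename Subtype.val (leafMonomial 𝕜 l) = leafMonomial 𝕜 (l : α) := by
  rw [leafMonomial, leafMonomial, rename_sfMon Subtype.val_injective]
  congr 1
  ext a
  simp only [Finset.mem_image, Set.Finite.mem_toFinset, Set.mem_Iic]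
  exact ⟨fun ⟨b, hb, hba⟩ => hba ▸ hb, fun ha => ⟨⟨a, hs ha l.2⟩, ha, rfl⟩⟩

lemma map_rename_val_posetLeafIdeal {s : Set α} (hu : IsUpperSet s) (hl : IsLowerSet s) :
    (posetLeafIdeal 𝕜 s).map (rename Subtype.val) =
      Ideal.span (leafMonomial 𝕜 '' {l ∈ s | IsMax l}) := by
  rw [posetLeafIdeal, Ideal.map_span, Set.image_image]
  congr 1
  ext f
  simp only [Set.mem_image, Set.mem_ofPred_eq, rename_val_leafMonomial hl,
    ← isMax_coe_iff_of_isUpperSet hu, Subtype.exists, exists_prop, and_assoc]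

lemma posetLeafIdeal_eq_sup {s : Set α} (hu : IsUpperSet s) (hl : IsLowerSet s) :
    posetLeafIdeal 𝕜 α = (posetLeafIdeal 𝕜 s).map (rename Subtype.val) ⊔
      (posetLeafIdeal 𝕜 ↥sᶜ).map (rename Subtype.val) := by
  rw [map_rename_val_posetLeafIdeal hu hl, map_rename_val_posetLeafIdeal hl.compl hu.compl,
    ← Ideal.span_union, ← Set.image_union, ← Set.sep_union]
  simp only [Set.mem_compl_iff, _root_.em, true_and]
  rfl

lemma posetLeafIdeal_eq_inf_of_isBot {r : α} (hr : IsBot r) (hr' : ¬ IsMax r) :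
    posetLeafIdeal 𝕜 α = Ideal.span {X r} ⊓
      (posetLeafIdeal 𝕜 ↥({r} : Set α)ᶜ).map (rename Subtype.val) := by
  have hu : IsUpperSet ({r} : Set α)ᶜ := fun a b hab ha hb =>
    ha (le_antisymm (hab.trans_eq hb) (hr a))
  have hIic (l : ↥({r} : Set α)ᶜ) : {r} ∪ (Set.Iic l).toFinite.toFinset.image Subtype.val =
      (Set.Iic (l : α)).toFinite.toFinset := by
    ext a
    by_cases har : a = r
    · simp [har, hr (l : α)]
    · simp [har]
      rfl
  have hX : Ideal.span {X r} = Ideal.span (sfMon 𝕜 '' {{r}}) := by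
    simp [sfMon]
  unfold posetLeafIdeal
  rw [Ideal.map_span, Set.image_image, hX]
  simp_rw [leafMonomial, rename_sfMon Subtype.val_injective]
  rw [← Set.image_image (sfMon 𝕜)
      (fun l : ↥({r} : Set α)ᶜ => (Set.Iic l).toFinite.toFinset.image Subtype.val),
    span_sfMon_image_inf, Set.image2_singleton_left,
    Set.image_image, Set.image_image]
  congr 1
  ext f
  simp only [Set.mem_image, Set.mem_ofPred_eq, hIic, Subtype.exists,
    ← isMax_coe_iff_of_isUpperSet hu]
  constructor
  · rintro ⟨l, hl, rfl⟩
    exact ⟨l, fun hlr => hr' (hlr ▸ hl), hl, rfl⟩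
  · rintro ⟨l, -, hl, rfl⟩
    exact ⟨l, hl, rfl⟩

lemma posetLeafIdeal_of_subsingleton [Subsingleton α] (a : α) :
    posetLeafIdeal 𝕜 α = Ideal.span {X a} := by
  have hmax : {l : α | IsMax l} = {a} :=
    Set.eq_singleton_iff_unique_mem.2
      ⟨fun b _ => (Subsingleton.elim b a).le, fun b _ => Subsingleton.elim b a⟩
  have hIic : (Set.Iic a).toFinite.toFinset = {a} := by
    ext b
    simp [Subsingleton.elim b a]
  rw [posetLeafIdeal, hmax, Set.image_singleton, leafMonomial, hIic, sfMon, Finset.prod_singleton]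

end LeafIdeal

section Forest

variable {α : Type} [PartialOrder α]

lemma IsPForest.subtype (hP : IsPForest ‹PartialOrder α›) (s : Set α) :
    IsPForest (inferInstance : PartialOrder s) :=
  fun p q r hq hr => hP p q r hq hr

lemma IsPForest.isLowerSet_Ici (hP : IsPForest ‹PartialOrder α›) {r : α}
    (hr : IsMin r) : IsLowerSet (Set.Ici r) := by
  intro b a hab hrb
  obtain rfl | hab := hab.eq_or_lt
  · exact hrb
  obtain rfl | hrb := hrb.eq_or_lt
  · exact hr hab.le
  rcases hP b a r hab hrb with har | hra
  · exact hr har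
  · exact hra

end Forest

theorem posetLeafIdeal_isSeriesParallelUpToRelabel (𝕜 : Type) [Field 𝕜] (α : Type) [Fintype α]
    [PartialOrder α] [Nonempty α] (hP : IsPForest ‹PartialOrder α›) :
    IsSeriesParallelUpToRelabel (posetLeafIdeal 𝕜 α) := by
  revert hP
  refine Fintype.induction_subsingleton_or_nontrivial
    (P := fun α _ => ∀ [PartialOrder α] [Nonempty α], IsPForest ‹PartialOrder α› →
      IsSeriesParallelUpToRelabel (posetLeafIdeal 𝕜 α)) α ?_ ?_
  · intro α _ _ _ ⟨a⟩ _
    let : Unique α := uniqueOfSubsingleton a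
    rw [posetLeafIdeal_of_subsingleton a]
    exact .span_X
  · intro α _ _ ih _ _ hP
    obtain ⟨r, hr⟩ :=
      exists_minimal_of_wellFoundedLT (fun _ : α => True) ⟨Classical.arbitrary α, trivial⟩
    rw [minimal_true] at hr
    by_cases hbot : IsBot r
    · obtain ⟨a, ha⟩ := exists_ne r
      have : Nonempty ↥({r} : Set α)ᶜ := ⟨⟨a, ha⟩⟩
      have hX : IsSeriesParallelUpToRelabel
          (Ideal.span {(X default : MvPolynomial ({r} : Set α) 𝕜)}) := .span_X
      have h := hX.inf_compl (ih _ (Fintype.card_subtype_lt (x := r) (by simp)) (hP.subtype _))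
      rwa [Ideal.map_span, Set.image_singleton, rename_X, Set.default_coe_singleton,
        ← posetLeafIdeal_eq_inf_of_isBot hbot hbot.not_isMax] at h
    · obtain ⟨a, ha⟩ : ∃ a, ¬ r ≤ a := by simpa [IsBot] using hbot
      have : Nonempty (Set.Ici r) := ⟨⟨r, le_rfl⟩⟩
      have : Nonempty ↥(Set.Ici r)ᶜ := ⟨⟨a, ha⟩⟩
      rw [posetLeafIdeal_eq_sup (isUpperSet_Ici r) (hP.isLowerSet_Ici hr)]
      exact (ih _ (Fintype.card_subtype_lt ha) (hP.subtype _)).sup_compl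
        (ih _ (Fintype.card_subtype_lt (x := r) (by simp)) (hP.subtype _))

/-- For every (nonempty) forest `P` on `{1,…,n}`, the leaf ideal `I_L(P)` is a
series-parallel ideal up to relabeling of the variables: there is a permutation `π` of the
variable indices such that the image of `I_L(P)` under the ring isomorphism `x_i ↦ x_{π i}`
is a series-parallel ideal. -/
theorem stmt16 {𝕜 : Type} [Field 𝕜] (n : ℕ) (hn : 1 ≤ n) (P : PartialOrder (Fin n))
    (hforest : IsPForest P) :
    ∃ π : Equiv.Perm (Fin n),
      IsSeriesParallel 𝕜 n
        (Ideal.map (MvPolynomial.rename (π : Fin n → Fin n)).toRingHom (leafIdeal 𝕜 P)) := by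
  obtain ⟨m, e, h⟩ :=
    @posetLeafIdeal_isSeriesParallelUpToRelabel 𝕜 _ (Fin n) _ P ⟨⟨0, hn⟩⟩ hforest
  obtain rfl : n = m := Fin.equiv_iff_eq.mp ⟨e⟩
  exact ⟨e, by rwa [leafIdeal_eq_posetLeafIdeal]⟩
end
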